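/- Let X ⊆ ℝⁿ be closed, let f : ℝⁿ → ℝⁿ be continuous, let V : ℝⁿ → ℝ be continuously differentiable, and let β be an extended class-K function with ⟨∇V(x), f(x)⟩ ≤ −β(V(x)) for all x ∈ X. Define A = {x ∈ X : V(x) ≤ 0}. Then: (a) A is a closed subset of ℝⁿ; and (b) A is forward invariant along trajectories: for every differentiable curve x : [0,∞) → ℝⁿ with x'(t) = f(x(t)) and x(t) ∈ X for all t ≥ 0 and x(0) ∈ A, one has x(t) ∈ A for all t ≥ 0. -/

import Mathlib

/-!
Along a trajectory `x` the function `g = V ∘ x` satisfies `g' = ⟪∇V(x), f(x)⟫ ≤ -β(g)`, which is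
`≤ 0` wherever `g > 0` since `β` is increasing with `β 0 = 0`. If `g t > 0`, let `c` be the last
time in `[0, t]` with `g c ≤ 0`; then `g` is antitone on `[c, t]`, so `g t ≤ g c ≤ 0`.
-/

open scoped RealInnerProductSpace

/-- An extended class-K function: a strictly increasing continuous function
`β : ℝ → ℝ` with `β 0 = 0`. -/
def ExtendedClassK (β : ℝ → ℝ) : Prop :=
  Continuous β ∧ StrictMono β ∧ β 0 = 0

open Set

theorem HasGradientAt.comp_hasDerivAt {E : Type*} [NormedAddCommGroup E] [InnerProductSpace ℝ E]
    [CompleteSpace E] {V : E → ℝ} {gradV : E} {x : ℝ → E} {v : E} {t : ℝ}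
    (hV : HasGradientAt V gradV (x t)) (hx : HasDerivAt x v t) :
    HasDerivAt (V ∘ x) ⟪gradV, v⟫ t := by
  simpa [InnerProductSpace.toDual_apply_apply] using hV.hasFDerivAt.comp_hasDerivAt t hx

theorem nonpos_of_deriv_nonpos_of_pos {g g' : ℝ → ℝ} {a b : ℝ} (hab : a ≤ b)
    (hg : ∀ s ∈ Icc a b, HasDerivAt g (g' s) s) (hg' : ∀ s ∈ Icc a b, 0 < g s → g' s ≤ 0)
    (ha : g a ≤ 0) : g b ≤ 0 := by
  have hcont : ContinuousOn g (Icc a b) := fun s hs => (hg s hs).continuousAt.continuousWithinAt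
  have hS : IsClosed {s ∈ Icc a b | g s ≤ 0} :=
    hcont.preimage_isClosed_of_isClosed isClosed_Icc isClosed_Iic
  obtain ⟨c, ⟨hc, hgc⟩, hc_max⟩ := (isCompact_Icc.of_isClosed_subset hS fun _ h => h.1)
    |>.exists_isGreatest ⟨a, left_mem_Icc.2 hab, ha⟩
  have hsub : Icc c b ⊆ Icc a b := Icc_subset_Icc hc.1 le_rfl
  have hanti : AntitoneOn g (Icc c b) := by
    refine antitoneOn_of_hasDerivWithinAt_nonpos (convex_Icc c b) (hcont.mono hsub)
      (fun s hs => (hg s (hsub (interior_subset hs))).hasDerivWithinAt) fun s hs => ?_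
    rw [interior_Icc] at hs
    have hs' : s ∈ Icc a b := hsub (Ioo_subset_Icc_self hs)
    refine hg' s hs' (lt_of_not_ge fun hgs => ?_)
    exact (hc_max ⟨hs', hgs⟩).not_gt hs.1
  exact (hanti (left_mem_Icc.2 hc.2) (right_mem_Icc.2 hc.2) hc.2).trans hgc

theorem sublevel_forward_invariant {E : Type*} [NormedAddCommGroup E] [InnerProductSpace ℝ E]
    [CompleteSpace E] {X : Set E} {f : E → E} {V : E → ℝ} {β : ℝ → ℝ}
    (hV : Differentiable ℝ V) (hβ : Monotone β) (hβ0 : β 0 = 0)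
    (hdecr : ∀ x ∈ X, ⟪gradient V x, f x⟫ ≤ -β (V x)) {x : ℝ → E}
    (hx : ∀ t, 0 ≤ t → HasDerivAt x (f (x t)) t) (hxX : ∀ t, 0 ≤ t → x t ∈ X)
    (hx0 : V (x 0) ≤ 0) {t : ℝ} (ht : 0 ≤ t) : V (x t) ≤ 0 := by
  refine nonpos_of_deriv_nonpos_of_pos (g := V ∘ x) ht
    (fun s hs => (hV (x s)).hasGradientAt.comp_hasDerivAt (hx s hs.1)) (fun s hs hpos => ?_) hx0
  calc ⟪gradient V (x s), f (x s)⟫ ≤ -β (V (x s)) := hdecr _ (hxX s hs.1)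
    _ ≤ -β 0 := neg_le_neg (hβ hpos.le)
    _ = 0 := by rw [hβ0, neg_zero]

theorem sublevel_set_closed_and_forward_invariant_general {n : ℕ}
    (X : Set (EuclideanSpace ℝ (Fin n))) (hX : IsClosed X)
    (f : EuclideanSpace ℝ (Fin n) → EuclideanSpace ℝ (Fin n))
    (V : EuclideanSpace ℝ (Fin n) → ℝ) (hV : ContDiff ℝ 1 V)
    (β : ℝ → ℝ) (hβ : ExtendedClassK β)
    (hdecr : ∀ x ∈ X, ⟪gradient V x, f x⟫ ≤ -β (V x)) :
    IsClosed {x ∈ X | V x ≤ 0} ∧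
    (∀ x : ℝ → EuclideanSpace ℝ (Fin n),
      (∀ t : ℝ, 0 ≤ t → HasDerivAt x (f (x t)) t) →
      (∀ t : ℝ, 0 ≤ t → x t ∈ X) →
      x 0 ∈ {x ∈ X | V x ≤ 0} →
      ∀ t : ℝ, 0 ≤ t → x t ∈ {x ∈ X | V x ≤ 0}) := by
  obtain ⟨-, hβ_mono, hβ0⟩ := hβ
  refine ⟨hX.inter (isClosed_le hV.continuous continuous_const), fun x hx hxX hx0 t ht => ?_⟩
  exact ⟨hxX t ht, sublevel_forward_invariant (hV.differentiable one_ne_zero) hβ_mono.monotone hβ0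
    hdecr hx hxX hx0.2 ht⟩

/-- The zero sublevel set `A = {x ∈ X : V x ≤ 0}` of a Lyapunov-like function is
(a) closed, and (b) forward invariant along every trajectory of `ẋ = f(x)` that
remains in `X`. -/
theorem sublevel_set_closed_and_forward_invariant {n : ℕ}
    (X : Set (EuclideanSpace ℝ (Fin n))) (hX : IsClosed X)
    (f : EuclideanSpace ℝ (Fin n) → EuclideanSpace ℝ (Fin n))
    (hf : Continuous f)
    (V : EuclideanSpace ℝ (Fin n) → ℝ) (hV : ContDiff ℝ 1 V)
    (β : ℝ → ℝ) (hβ : ExtendedClassK β)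
    (hdecr : ∀ x ∈ X, ⟪gradient V x, f x⟫ ≤ -β (V x)) :
    IsClosed {x ∈ X | V x ≤ 0} ∧
    (∀ x : ℝ → EuclideanSpace ℝ (Fin n),
      (∀ t : ℝ, 0 ≤ t → HasDerivAt x (f (x t)) t) →
      (∀ t : ℝ, 0 ≤ t → x t ∈ X) →
      x 0 ∈ {x ∈ X | V x ≤ 0} →
      ∀ t : ℝ, 0 ≤ t → x t ∈ {x ∈ X | V x ≤ 0}) :=
  sublevel_set_closed_and_forward_invariant_general X hX f V hV β hβ hdecr
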